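/- arXiv:1012.1390 — 2 statements merged into one kernel-verified Lean document; each statement's English description precedes it below -/
import Mathlib

section
/- Let Y and Z be closed subspaces of a Banach space X with Hausdorff distance d = d(Y,Z), and let P : X → X be a bounded projection onto Y with ‖P‖ < d⁻¹ - 1. Then for every z ∈ Z, ‖P(z) - z‖ ≤ d(1 + ‖P‖)‖z‖. -/
/-! Since `P` fixes `Y` pointwise, `P z - z = P (z - y) - (z - y)` for every `y ∈ Y`, so
`‖P z - z‖ ≤ (1 + ‖P‖) dist(z, Y)`. The distance to a subspace is positively homogeneous, hence
`dist(z, Y) ≤ d ‖z‖` for `z ∈ Z` by normalising `z` into the unit ball of `Z`. -/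

open NormedSpace Metric

noncomputable section

universe u v w

/-- The Hausdorff distance between two subspaces of a normed space, computed via
their unit balls: `d(Y,Z) = max {sup {dist(y,Z) : y ∈ Y, ‖y‖ ≤ 1}, sup {dist(z,Y) : z ∈ Z, ‖z‖ ≤ 1}}`. -/
def subHausdorffDist (X : Type u) [NormedAddCommGroup X] [NormedSpace ℂ X]
    (Y Z : Submodule ℂ X) : ℝ :=
  max (sSup ((fun y => Metric.infDist y (Z : Set X)) '' {y : X | y ∈ Y ∧ ‖y‖ ≤ 1}))
      (sSup ((fun z => Metric.infDist z (Y : Set X)) '' {z : X | z ∈ Z ∧ ‖z‖ ≤ 1}))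

theorem Submodule.infDist_smul {𝕜 E : Type*} [NormedField 𝕜] [SeminormedAddCommGroup E]
    [NormedSpace 𝕜 E] (Y : Submodule 𝕜 E) (c : 𝕜) (x : E) :
    infDist (c • x) Y = ‖c‖ * infDist x Y := by
  have hmk (v : E) : ‖(Submodule.Quotient.mk v : E ⧸ Y)‖ = infDist v Y :=
    QuotientAddGroup.norm_mk (S := Y.toAddSubgroup) v
  rw [← hmk, ← hmk, Submodule.Quotient.mk_smul, norm_smul]

theorem ContinuousLinearMap.norm_apply_sub_le_mul_infDist {𝕜 E : Type*}
    [NontriviallyNormedField 𝕜] [SeminormedAddCommGroup E] [NormedSpace 𝕜 E]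
    {Y : Submodule 𝕜 E} (P : E →L[𝕜] E) (hP : ∀ y ∈ Y, P y = y) (x : E) :
    ‖P x - x‖ ≤ (1 + ‖P‖) * infDist x Y := by
  have hpos : 0 < 1 + ‖P‖ := by positivity
  rw [mul_comm, ← div_le_iff₀ hpos, le_infDist ⟨0, Y.zero_mem⟩]
  intro y hy
  rw [div_le_iff₀ hpos, dist_eq_norm]
  calc ‖P x - x‖ = ‖P (x - y) - (x - y)‖ := by rw [map_sub, hP y hy]; abel_nf
    _ ≤ ‖P (x - y)‖ + ‖x - y‖ := norm_sub_le _ _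
    _ ≤ ‖P‖ * ‖x - y‖ + ‖x - y‖ := by gcongr; exact P.le_opNorm _
    _ = ‖x - y‖ * (1 + ‖P‖) := by ring

theorem infDist_le_subHausdorffDist {X : Type u} [NormedAddCommGroup X] [NormedSpace ℂ X]
    {Y Z : Submodule ℂ X} {z : X} (hz : z ∈ Z) (hz1 : ‖z‖ ≤ 1) :
    infDist z Y ≤ subHausdorffDist X Y Z := by
  have hbdd : BddAbove ((fun z => infDist z (Y : Set X)) '' {z : X | z ∈ Z ∧ ‖z‖ ≤ 1}) := by
    refine ⟨1, ?_⟩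
    rintro _ ⟨u, ⟨-, hu⟩, rfl⟩
    exact (infDist_le_dist_of_mem Y.zero_mem).trans ((dist_zero_right u).trans_le hu)
  exact (le_csSup hbdd ⟨z, ⟨hz, hz1⟩, rfl⟩).trans (le_max_right _ _)

theorem infDist_le_subHausdorffDist_mul_norm {X : Type u} [NormedAddCommGroup X]
    [NormedSpace ℂ X] {Y Z : Submodule ℂ X} {z : X} (hz : z ∈ Z) :
    infDist z Y ≤ subHausdorffDist X Y Z * ‖z‖ := by
  rcases eq_or_ne z 0 with rfl | hz0
  · simp [infDist_zero_of_mem Y.zero_mem]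
  have hnorm : (‖z‖ : ℂ) ≠ 0 := by exact_mod_cast norm_ne_zero_iff.mpr hz0
  set u : X := (‖z‖ : ℂ)⁻¹ • z
  have hu : ‖u‖ = 1 := by
    simp only [u, norm_smul, norm_inv, Complex.norm_real, norm_norm,
      inv_mul_cancel₀ (norm_ne_zero_iff.mpr hz0)]
  calc infDist z Y = infDist ((‖z‖ : ℂ) • u) Y := by rw [smul_inv_smul₀ hnorm]
    _ = ‖z‖ * infDist u Y := by rw [Y.infDist_smul, Complex.norm_real, norm_norm]
    _ ≤ ‖z‖ * subHausdorffDist X Y Z := by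
        gcongr; exact infDist_le_subHausdorffDist (Z.smul_mem _ hz) hu.le
    _ = subHausdorffDist X Y Z * ‖z‖ := mul_comm _ _

theorem stmt2_general {X : Type u} [NormedAddCommGroup X] [NormedSpace ℂ X]
    (Y Z : Submodule ℂ X)
    (P : X →L[ℂ] X) (hproj : ∀ x, P (P x) = P x) (hrange : LinearMap.range (P : X →ₗ[ℂ] X) = Y) :
    ∀ z ∈ Z, ‖P z - z‖ ≤ subHausdorffDist X Y Z * (1 + ‖P‖) * ‖z‖ := by
  intro z hz
  have hfix : ∀ y ∈ Y, P y = y := by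
    rintro _ hy
    obtain ⟨x, rfl⟩ := hrange ▸ hy
    exact hproj x
  calc ‖P z - z‖ ≤ (1 + ‖P‖) * infDist z Y := P.norm_apply_sub_le_mul_infDist hfix z
    _ ≤ (1 + ‖P‖) * (subHausdorffDist X Y Z * ‖z‖) := by
        gcongr; exact infDist_le_subHausdorffDist_mul_norm hz
    _ = subHausdorffDist X Y Z * (1 + ‖P‖) * ‖z‖ := by ring

theorem stmt2 {X : Type u} [NormedAddCommGroup X] [NormedSpace ℂ X] [CompleteSpace X]
    (Y Z : Submodule ℂ X) (hY : IsClosed (Y : Set X)) (hZ : IsClosed (Z : Set X))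
    (P : X →L[ℂ] X) (hproj : ∀ x, P (P x) = P x) (hrange : LinearMap.range (P : X →ₗ[ℂ] X) = Y)
    (hnorm : ‖P‖ < (subHausdorffDist X Y Z)⁻¹ - 1) :
    ∀ z ∈ Z, ‖P z - z‖ ≤ subHausdorffDist X Y Z * (1 + ‖P‖) * ‖z‖ :=
  stmt2_general Y Z P hproj hrange
end
end

section
/- Let A be a unital Banach algebra with multiplication map π : A ⊗̂ A^{op} → A, let δ ∈ (ker π)**, and let R = Σᵢ aᵢ ⊗ bᵢ ∈ ker π be a finite sum of elementary tensors. Then R ⋆ δ - R = Σᵢ (aᵢ·δ - δ·aᵢ - aᵢ ⊗ 1 + 1 ⊗ aᵢ)·bᵢ, where ⋆ is the (Arens extension of the) product of A ⊗̂ A^{op}, and consequently ‖R ⋆ δ - R‖ ≤ ‖R‖·sup_{‖a‖≤1}‖a·δ - δ·a - a ⊗ 1 + 1 ⊗ a‖ when the infimum over representations of R is taken. -/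
/-!
Since `1 ⊗ 1` is the unit of `A ⊗̂ Aᵒᵖ`, `R ⋆ δ - R = R ⋆ Δ` for `Δ = δ - 1 ⊗ 1`, and
`a·δ - δ·a - a ⊗ 1 + 1 ⊗ a = a·Δ - Δ·a`. For `R = Σ aᵢ ⊗ bᵢ` the Arens product `R ⋆ Δ` is
`Σ (aᵢ·Δ)·bᵢ`, while `Σ (Δ·aᵢ)·bᵢ = Δ·(Σ aᵢbᵢ) = 0`; this is the identity. For the estimate,
`x ↦ x·Δ - Δ·x` is a bounded linear map of norm at most `c`, and right multiplication by `b` has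
norm at most `‖b‖` on `A ⊗̂ A` (projective tensor norm), hence also on its bidual.
-/

open NormedSpace Metric

noncomputable section

universe u v w

instance {E : Type*} [SeminormedAddCommGroup E] [NormedSpace ℂ E] :
    SeminormedAddCommGroup (StrongDual ℂ E) := inferInstance

instance {E : Type*} [SeminormedAddCommGroup E] [NormedSpace ℂ E] :
    NormedSpace ℂ (StrongDual ℂ E) := inferInstance

/-- The Banach-space transpose (adjoint) of a continuous linear map. -/
def dualTranspose {X : Type u} {Y : Type v} [NormedAddCommGroup X] [NormedSpace ℂ X]
    [NormedAddCommGroup Y] [NormedSpace ℂ Y] (f : X →L[ℂ] Y) :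
    StrongDual ℂ Y →L[ℂ] StrongDual ℂ X :=
  (ContinuousLinearMap.compL ℂ X Y ℂ).flip f

/-- The bidual (double adjoint) map `f** : X** → Y**`. -/
def bidualMap {X : Type u} {Y : Type v} [NormedAddCommGroup X] [NormedSpace ℂ X]
    [NormedAddCommGroup Y] [NormedSpace ℂ Y] (f : X →L[ℂ] Y) :
    StrongDual ℂ (StrongDual ℂ X) →L[ℂ] StrongDual ℂ (StrongDual ℂ Y) :=
  dualTranspose (dualTranspose f)

/-- `(T, p)` is (an isometric copy of) the projective tensor product `A ⊗̂ A`: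
`p` is a contractive bilinear map with dense span satisfying the universal
property of the projective tensor norm. -/
structure IsProjTensorProduct (A : Type u) (T : Type v) [NormedAddCommGroup A]
    [NormedSpace ℂ A] [NormedAddCommGroup T] [NormedSpace ℂ T] [CompleteSpace T]
    (p : A →L[ℂ] A →L[ℂ] T) : Prop where
  norm_tmul_le : ∀ a b : A, ‖p a b‖ ≤ ‖a‖ * ‖b‖
  dense_span : Dense (↑(Submodule.span ℂ (Set.range fun ab : A × A => p ab.1 ab.2)) : Set T)
  lift : ∀ {W : Type w} [NormedAddCommGroup W] [NormedSpace ℂ W] [CompleteSpace W]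
      (f : A →L[ℂ] A →L[ℂ] W), ∃ g : T →L[ℂ] W, (∀ a b : A, g (p a b) = f a b) ∧ ‖g‖ ≤ ‖f‖

section Bidual

variable {X Y Z : Type*} [NormedAddCommGroup X] [NormedSpace ℂ X] [NormedAddCommGroup Y]
  [NormedSpace ℂ Y] [NormedAddCommGroup Z] [NormedSpace ℂ Z]

def bidualMapL :
    (X →L[ℂ] Y) →L[ℂ] StrongDual ℂ (StrongDual ℂ X) →L[ℂ] StrongDual ℂ (StrongDual ℂ Y) :=
  (ContinuousLinearMap.compL ℂ (StrongDual ℂ Y) (StrongDual ℂ X) ℂ).flip ∘L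
    (ContinuousLinearMap.compL ℂ X Y ℂ).flip

@[simp]
lemma bidualMapL_apply (f : X →L[ℂ] Y) : bidualMapL f = bidualMap f := rfl

@[simp]
lemma bidualMap_inclusionInDoubleDual (f : X →L[ℂ] Y) (x : X) :
    bidualMap f (inclusionInDoubleDual ℂ X x) = inclusionInDoubleDual ℂ Y (f x) := rfl

lemma bidualMap_comp (g : Y →L[ℂ] Z) (f : X →L[ℂ] Y) :
    bidualMap (g ∘L f) = bidualMap g ∘L bidualMap f := rfl

lemma norm_dualTranspose_le (f : X →L[ℂ] Y) : ‖dualTranspose f‖ ≤ ‖f‖ :=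
  ContinuousLinearMap.opNorm_le_bound _ (norm_nonneg f) fun g =>
    (g.opNorm_comp_le f).trans_eq (mul_comm _ _)

lemma norm_bidualMap_le (f : X →L[ℂ] Y) : ‖bidualMap f‖ ≤ ‖f‖ :=
  (norm_dualTranspose_le _).trans (norm_dualTranspose_le f)

def IsArensExtension (m : X →L[ℂ] Y →L[ℂ] Z)
    (star : StrongDual ℂ (StrongDual ℂ X) →L[ℂ] StrongDual ℂ (StrongDual ℂ Y) →L[ℂ]
      StrongDual ℂ (StrongDual ℂ Z)) : Prop :=
  ∀ F G f g, (∀ x, g x = G (dualTranspose (m x) f)) → star F G f = F g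

lemma IsArensExtension.inclusionInDoubleDual_left {m : X →L[ℂ] Y →L[ℂ] Z}
    {star : StrongDual ℂ (StrongDual ℂ X) →L[ℂ] StrongDual ℂ (StrongDual ℂ Y) →L[ℂ]
      StrongDual ℂ (StrongDual ℂ Z)} (hstar : IsArensExtension m star) (x : X)
    (G : StrongDual ℂ (StrongDual ℂ Y)) :
    star (inclusionInDoubleDual ℂ X x) G = bidualMap (m x) G := by
  ext f
  exact hstar _ G f (G ∘L ContinuousLinearMap.compL ℂ Y Z ℂ f ∘L m) fun _ => rfl

lemma IsArensExtension.inclusionInDoubleDual_inclusionInDoubleDual {m : X →L[ℂ] Y →L[ℂ] Z}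
    {star : StrongDual ℂ (StrongDual ℂ X) →L[ℂ] StrongDual ℂ (StrongDual ℂ Y) →L[ℂ]
      StrongDual ℂ (StrongDual ℂ Z)} (hstar : IsArensExtension m star) (x : X) (y : Y) :
    star (inclusionInDoubleDual ℂ X x) (inclusionInDoubleDual ℂ Y y) =
      inclusionInDoubleDual ℂ Z (m x y) := by
  rw [hstar.inclusionInDoubleDual_left, bidualMap_inclusionInDoubleDual]

end Bidual

namespace IsProjTensorProduct

variable {A T : Type*} [NormedRing A] [NormedAlgebra ℂ A] [NormedAddCommGroup T]
  [NormedSpace ℂ T] [CompleteSpace T] {p : A →L[ℂ] A →L[ℂ] T}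

lemma ext (hp : IsProjTensorProduct A T p) {W : Type*} [NormedAddCommGroup W] [NormedSpace ℂ W]
    {f g : T →L[ℂ] W} (h : ∀ a b, f (p a b) = g (p a b)) : f = g := by
  refine ContinuousLinearMap.coeFn_injective <|
    Continuous.ext_on hp.dense_span f.continuous g.continuous fun _ hx => ?_
  exact LinearMap.eqOn_span (f := f.toLinearMap) (g := g.toLinearMap)
    (by rintro _ ⟨ab, rfl⟩; exact h ab.1 ab.2) hx

lemma opNorm_le (hp : IsProjTensorProduct.{_, _, w} A T p) {Y : Type*} [NormedAddCommGroup Y]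
    [NormedSpace ℂ Y] (g : T →L[ℂ] Y) (f : A →L[ℂ] A →L[ℂ] Y)
    (hg : ∀ a b, g (p a b) = f a b) : ‖g‖ ≤ ‖f‖ := by
  refine g.opNorm_le_bound (norm_nonneg f) fun t => ?_
  refine NormedSpace.norm_le_dual_bound ℂ _ (by positivity) fun φ => ?_
  -- `lift` only reaches codomains in universe `w`, so `φ` is pushed into `ULift ℂ`.
  let ψ : Y →L[ℂ] ULift.{w} ℂ :=
    (ContinuousLinearEquiv.ulift (R₁ := ℂ) (M₁ := ℂ)).symm.toContinuousLinearMap ∘L φ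
  have hψ : ∀ y, ‖ψ y‖ = ‖φ y‖ := fun _ => rfl
  obtain ⟨h, hh, hhf⟩ := hp.lift (ContinuousLinearMap.compL ℂ A Y _ ψ ∘L f)
  have hψg : h = ψ ∘L g := hp.ext fun a b => by simp [hh, hg]
  have hψf : ‖ContinuousLinearMap.compL ℂ A Y _ ψ ∘L f‖ ≤ ‖φ‖ * ‖f‖ := by
    refine ContinuousLinearMap.opNorm_le_bound₂ _ (by positivity) fun a b => ?_
    calc ‖ψ (f a b)‖ = ‖φ (f a b)‖ := hψ _
      _ ≤ ‖φ‖ * (‖f‖ * ‖a‖ * ‖b‖) := φ.le_opNorm_of_le (f.le_opNorm₂ a b)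
      _ = ‖φ‖ * ‖f‖ * ‖a‖ * ‖b‖ := by ring
  calc ‖φ (g t)‖ = ‖h t‖ := by rw [hψg, ContinuousLinearMap.comp_apply, hψ]
    _ ≤ ‖φ‖ * ‖f‖ * ‖t‖ := h.le_of_opNorm_le (hhf.trans hψf) t
    _ = ‖f‖ * ‖t‖ * ‖φ‖ := by ring

end IsProjTensorProduct

section BimoduleActions

variable {A T : Type*} [NormedRing A] [NormedAlgebra ℂ A] [NormedAddCommGroup T]
  [NormedSpace ℂ T] {p : A →L[ℂ] A →L[ℂ] T} {m : T →L[ℂ] T →L[ℂ] T} {L R : A →L[ℂ] T →L[ℂ] T}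

lemma commutator_sub_tmul_one_one (hL : ∀ a b c, L a (p b c) = p (a * b) c)
    (hR : ∀ a b c, R a (p b c) = p b (c * a)) (δ : StrongDual ℂ (StrongDual ℂ T)) (x : A) :
    bidualMap (L x) (δ - inclusionInDoubleDual ℂ T (p 1 1)) -
        bidualMap (R x) (δ - inclusionInDoubleDual ℂ T (p 1 1)) =
      bidualMap (L x) δ - bidualMap (R x) δ -
        inclusionInDoubleDual ℂ T (p x 1) + inclusionInDoubleDual ℂ T (p 1 x) := by
  rw [map_sub, map_sub, bidualMap_inclusionInDoubleDual, bidualMap_inclusionInDoubleDual, hL, hR,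
    mul_one, one_mul]
  abel

variable [CompleteSpace T]

lemma norm_rightAction_le (hp : IsProjTensorProduct.{_, _, w} A T p)
    (hR : ∀ a b c, R a (p b c) = p b (c * a)) (x : A) : ‖R x‖ ≤ ‖x‖ := by
  let f : A →L[ℂ] A →L[ℂ] T :=
    (ContinuousLinearMap.compL ℂ A A T).flip ((ContinuousLinearMap.mul ℂ A).flip x) ∘L p
  refine (hp.opNorm_le (R x) f fun a b => hR x a b).trans <|
    ContinuousLinearMap.opNorm_le_bound₂ f (norm_nonneg x) fun a b => ?_
  calc ‖p a (b * x)‖ ≤ ‖a‖ * ‖b * x‖ := hp.norm_tmul_le a (b * x)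
    _ ≤ ‖a‖ * (‖b‖ * ‖x‖) := by gcongr; exact norm_mul_le b x
    _ = ‖x‖ * ‖a‖ * ‖b‖ := by ring

lemma product_tmul_eq_comp (hp : IsProjTensorProduct A T p)
    (hm : ∀ a b c d, m (p a b) (p c d) = p (a * c) (d * b))
    (hL : ∀ a b c, L a (p b c) = p (a * b) c) (hR : ∀ a b c, R a (p b c) = p b (c * a))
    (a b : A) : m (p a b) = R b ∘L L a :=
  hp.ext fun c d => by rw [hm, ContinuousLinearMap.comp_apply, hL, hR]

lemma rightAction_comp (hp : IsProjTensorProduct A T p)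
    (hR : ∀ a b c, R a (p b c) = p b (c * a)) (a b : A) : R b ∘L R a = R (a * b) :=
  hp.ext fun c d => by rw [ContinuousLinearMap.comp_apply, hR, hR, hR, mul_assoc]

lemma product_apply_tmul_one_one (hp : IsProjTensorProduct A T p)
    (hm : ∀ a b c d, m (p a b) (p c d) = p (a * c) (d * b)) (t : T) : m t (p 1 1) = t := by
  have hunit : m.flip (p 1 1) = ContinuousLinearMap.id ℂ T :=
    hp.ext fun a b => by simp [hm]
  exact DFunLike.congr_fun hunit t

variable {star : StrongDual ℂ (StrongDual ℂ T) →L[ℂ] StrongDual ℂ (StrongDual ℂ T) →L[ℂ]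
  StrongDual ℂ (StrongDual ℂ T)}

lemma arens_sum_tmul_eq_sum_commutator (hp : IsProjTensorProduct A T p)
    (hm : ∀ a b c d, m (p a b) (p c d) = p (a * c) (d * b)) (hstar : IsArensExtension m star)
    (hL : ∀ a b c, L a (p b c) = p (a * b) c) (hR : ∀ a b c, R a (p b c) = p b (c * a))
    {ι : Type*} (s : Finset ι) (a b : ι → A) (hker : ∑ i ∈ s, a i * b i = 0)
    (Δ : StrongDual ℂ (StrongDual ℂ T)) :
    star (inclusionInDoubleDual ℂ T (∑ i ∈ s, p (a i) (b i))) Δ =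
      ∑ i ∈ s, bidualMap (R (b i)) (bidualMap (L (a i)) Δ - bidualMap (R (a i)) Δ) := by
  have hRa : ∑ i ∈ s, bidualMap (R (b i)) (bidualMap (R (a i)) Δ) = 0 := by
    calc ∑ i ∈ s, bidualMap (R (b i)) (bidualMap (R (a i)) Δ)
        = (ContinuousLinearMap.apply ℂ _ Δ ∘L bidualMapL ∘L R) (∑ i ∈ s, a i * b i) := by
          rw [map_sum]
          refine Finset.sum_congr rfl fun i _ => ?_
          show _ = bidualMap (R (a i * b i)) Δ
          rw [← rightAction_comp hp hR, bidualMap_comp, ContinuousLinearMap.comp_apply]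
      _ = 0 := by rw [hker, map_zero]
  calc star (inclusionInDoubleDual ℂ T (∑ i ∈ s, p (a i) (b i))) Δ
      = ∑ i ∈ s, star (inclusionInDoubleDual ℂ T (p (a i) (b i))) Δ :=
        map_sum (star.flip Δ ∘L inclusionInDoubleDual ℂ T) _ s
    _ = ∑ i ∈ s, bidualMap (R (b i)) (bidualMap (L (a i)) Δ) := by
        simp only [hstar.inclusionInDoubleDual_left, product_tmul_eq_comp hp hm hL hR,
          bidualMap_comp, ContinuousLinearMap.comp_apply]
    _ = _ := by simp only [map_sub, Finset.sum_sub_distrib, hRa, sub_zero]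

lemma norm_sum_rightAction_commutator_le (hp : IsProjTensorProduct.{_, _, w} A T p)
    (hR : ∀ a b c, R a (p b c) = p b (c * a)) (Δ : StrongDual ℂ (StrongDual ℂ T)) {c : ℝ}
    (hc : ∀ x : A, ‖x‖ ≤ 1 → ‖bidualMap (L x) Δ - bidualMap (R x) Δ‖ ≤ c)
    {ι : Type*} (s : Finset ι) (a b : ι → A) :
    ‖∑ i ∈ s, bidualMap (R (b i)) (bidualMap (L (a i)) Δ - bidualMap (R (a i)) Δ)‖ ≤
      (∑ i ∈ s, ‖a i‖ * ‖b i‖) * c := by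
  let D : A →L[ℂ] StrongDual ℂ (StrongDual ℂ T) :=
    ContinuousLinearMap.apply ℂ _ Δ ∘L bidualMapL ∘L (L - R)
  have hD : ∀ x, D x = bidualMap (L x) Δ - bidualMap (R x) Δ := fun x => by
    simp [D]
  have hc0 : 0 ≤ c := by simpa using hc 0 (by simp)
  have hDc : ‖D‖ ≤ c := D.opNorm_le_of_unit_norm hc0 fun x hx => hD x ▸ hc x hx.le
  simp only [← hD]
  calc ‖∑ i ∈ s, bidualMap (R (b i)) (D (a i))‖
      ≤ ∑ i ∈ s, ‖bidualMap (R (b i)) (D (a i))‖ := norm_sum_le _ _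
    _ ≤ ∑ i ∈ s, ‖a i‖ * ‖b i‖ * c := Finset.sum_le_sum fun i _ => by
        calc ‖bidualMap (R (b i)) (D (a i))‖ ≤ ‖R (b i)‖ * ‖D (a i)‖ :=
              (bidualMap _).le_of_opNorm_le (norm_bidualMap_le _) _
          _ ≤ ‖b i‖ * (c * ‖a i‖) := by
              gcongr
              · exact norm_rightAction_le hp hR _
              · exact D.le_of_opNorm_le hDc _
          _ = ‖a i‖ * ‖b i‖ * c := by ring
    _ = (∑ i ∈ s, ‖a i‖ * ‖b i‖) * c := (Finset.sum_mul _ _ _).symm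

end BimoduleActions

theorem stmt17_general {A : Type u} [NormedRing A] [NormedAlgebra ℂ A]
    {T : Type v} [NormedAddCommGroup T] [NormedSpace ℂ T] [CompleteSpace T]
    (p : A →L[ℂ] A →L[ℂ] T) (hp : IsProjTensorProduct A T p)
    -- the multiplication of `A ⊗̂ Aᵒᵖ` : `(a ⊗ b) ⋆ (c ⊗ d) = ac ⊗ db`
    (m : T →L[ℂ] T →L[ℂ] T)
    (hm : ∀ a b c d : A, m (p a b) (p c d) = p (a * c) (d * b))
    -- `star` is the (first) Arens extension of `m` to the bidual
    (star : StrongDual ℂ (StrongDual ℂ T) →L[ℂ] StrongDual ℂ (StrongDual ℂ T) →L[ℂ] StrongDual ℂ (StrongDual ℂ T))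
    (hstar : ∀ (F G : StrongDual ℂ (StrongDual ℂ T)) (f g : StrongDual ℂ T),
      (∀ s : T, g s = G (dualTranspose (m s) f)) → star F G f = F g)
    -- the canonical bimodule actions of `A` on `A ⊗̂ A`
    (L R : A →L[ℂ] T →L[ℂ] T)
    (hL : ∀ a b c : A, L a (p b c) = p (a * b) c)
    (hR : ∀ a b c : A, R a (p b c) = p b (c * a))
    (δ : StrongDual ℂ (StrongDual ℂ T))
    {ι : Type w} (s : Finset ι) (a b : ι → A)
    (hker : (∑ i ∈ s, a i * b i) = 0) :
    star (inclusionInDoubleDual ℂ T (∑ i ∈ s, p (a i) (b i))) δ -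
        inclusionInDoubleDual ℂ T (∑ i ∈ s, p (a i) (b i)) =
      ∑ i ∈ s, bidualMap (R (b i))
        (bidualMap (L (a i)) δ - bidualMap (R (a i)) δ -
          inclusionInDoubleDual ℂ T (p (a i) 1) + inclusionInDoubleDual ℂ T (p 1 (a i))) ∧
    ∀ c : ℝ, (∀ x : A, ‖x‖ ≤ 1 →
        ‖bidualMap (L x) δ - bidualMap (R x) δ -
          inclusionInDoubleDual ℂ T (p x 1) + inclusionInDoubleDual ℂ T (p 1 x)‖ ≤ c) →
      ‖star (inclusionInDoubleDual ℂ T (∑ i ∈ s, p (a i) (b i))) δ -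
          inclusionInDoubleDual ℂ T (∑ i ∈ s, p (a i) (b i))‖ ≤
        (∑ i ∈ s, ‖a i‖ * ‖b i‖) * c := by
  have hcomm := commutator_sub_tmul_one_one hL hR δ
  set Δ := δ - inclusionInDoubleDual ℂ T (p 1 1)
  have key : star (inclusionInDoubleDual ℂ T (∑ i ∈ s, p (a i) (b i))) δ -
      inclusionInDoubleDual ℂ T (∑ i ∈ s, p (a i) (b i)) =
      ∑ i ∈ s, bidualMap (R (b i)) (bidualMap (L (a i)) Δ - bidualMap (R (a i)) Δ) := by
    rw [← arens_sum_tmul_eq_sum_commutator hp hm hstar hL hR s a b hker, map_sub,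
      IsArensExtension.inclusionInDoubleDual_inclusionInDoubleDual hstar,
      product_apply_tmul_one_one hp hm]
  refine ⟨?_, fun c hc => ?_⟩
  · simp only [key, hcomm]
  simp only [← hcomm] at hc
  exact key ▸ norm_sum_rightAction_commutator_le hp hR Δ hc s a b

theorem stmt17 {A : Type u} [NormedRing A] [NormedAlgebra ℂ A] [NormOneClass A]
    [CompleteSpace A] {T : Type v} [NormedAddCommGroup T] [NormedSpace ℂ T] [CompleteSpace T]
    (p : A →L[ℂ] A →L[ℂ] T) (hp : IsProjTensorProduct A T p)
    (πh : T →L[ℂ] A) (hπh : ∀ a b : A, πh (p a b) = a * b)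
    -- the multiplication of `A ⊗̂ Aᵒᵖ` : `(a ⊗ b) ⋆ (c ⊗ d) = ac ⊗ db`
    (m : T →L[ℂ] T →L[ℂ] T)
    (hm : ∀ a b c d : A, m (p a b) (p c d) = p (a * c) (d * b))
    -- `star` is the (first) Arens extension of `m` to the bidual
    (star : StrongDual ℂ (StrongDual ℂ T) →L[ℂ] StrongDual ℂ (StrongDual ℂ T) →L[ℂ] StrongDual ℂ (StrongDual ℂ T))
    (hstar : ∀ (F G : StrongDual ℂ (StrongDual ℂ T)) (f g : StrongDual ℂ T),
      (∀ s : T, g s = G (dualTranspose (m s) f)) → star F G f = F g)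
    -- the canonical bimodule actions of `A` on `A ⊗̂ A`
    (L R : A →L[ℂ] T →L[ℂ] T)
    (hL : ∀ a b c : A, L a (p b c) = p (a * b) c)
    (hR : ∀ a b c : A, R a (p b c) = p b (c * a))
    (δ : StrongDual ℂ (StrongDual ℂ T)) (hδ : bidualMap πh δ = 0)
    {ι : Type w} (s : Finset ι) (a b : ι → A)
    (hker : (∑ i ∈ s, a i * b i) = 0) :
    star (inclusionInDoubleDual ℂ T (∑ i ∈ s, p (a i) (b i))) δ -
        inclusionInDoubleDual ℂ T (∑ i ∈ s, p (a i) (b i)) =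
      ∑ i ∈ s, bidualMap (R (b i))
        (bidualMap (L (a i)) δ - bidualMap (R (a i)) δ -
          inclusionInDoubleDual ℂ T (p (a i) 1) + inclusionInDoubleDual ℂ T (p 1 (a i))) ∧
    ∀ c : ℝ, (∀ x : A, ‖x‖ ≤ 1 →
        ‖bidualMap (L x) δ - bidualMap (R x) δ -
          inclusionInDoubleDual ℂ T (p x 1) + inclusionInDoubleDual ℂ T (p 1 x)‖ ≤ c) →
      ‖star (inclusionInDoubleDual ℂ T (∑ i ∈ s, p (a i) (b i))) δ -
          inclusionInDoubleDual ℂ T (∑ i ∈ s, p (a i) (b i))‖ ≤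
        (∑ i ∈ s, ‖a i‖ * ‖b i‖) * c :=
  stmt17_general p hp m hm star hstar L R hL hR δ s a b hker
end
end
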